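/- arXiv:1008.0899 — 4 statements merged into one kernel-verified Lean document; each statement's English description precedes it below -/
import Mathlib

section
/- Let n > 1, δ ∈ (0,1), p ≥ 1, R > 0 and T > 0. Let g : ℝ^n → ℝ be measurable with ∫_{|y| ≤ R} |g(y)|^{p n (1+δ)/2} dy < ∞. Then sup_{x ∈ ℝ^n} ∫_0^T ∫_{|y| ≤ R} |g(y)|^{p(1+δ/2)} K_s(x,y) dy ds ≤ C (∫_{|y| ≤ R} |g(y)|^{p n (1+δ)/2} dy)^{(2+δ)/(n(1+δ))} < ∞, where the constant C depends only on n, δ, p and T. -/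
/-!
Hölder's inequality in space, with exponent `q = n(1+δ)/(2+δ)` on `|g|^{p(1+δ/2)}` (so that its
`q`-th power is `|g|^{pn(1+δ)/2}`) and the conjugate exponent `q'` on the Gaussian, whose
`L^{q'}` norm is computed exactly, bounds the inner integral by
`c · (∫ |g|^{pn(1+δ)/2})^{1/q} · s^{-n/(2q)}`. Since `n/(2q) = (2+δ)/(2+2δ) < 1`, this time
singularity is integrable on `(0, T]`.
-/

open MeasureTheory Metric Real Module

variable {V : Type*} [NormedAddCommGroup V] [InnerProductSpace ℝ V]

/-- Unnormalized: the factor `(2π)^{-d/2}` of the probabilistic heat kernel is omitted. -/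
noncomputable def heatKernel (s : ℝ) (x y : V) : ℝ :=
  s ^ (-(finrank ℝ V : ℝ) / 2) * exp (-‖x - y‖ ^ 2 / (2 * s))

lemma heatKernel_nonneg {s : ℝ} (hs : 0 ≤ s) (x y : V) : 0 ≤ heatKernel s x y := by
  unfold heatKernel; positivity

lemma continuous_heatKernel (s : ℝ) (x : V) : Continuous (heatKernel s x) := by
  unfold heatKernel; fun_prop

variable [FiniteDimensional ℝ V] [MeasurableSpace V] [BorelSpace V]

theorem lintegral_ofReal_exp_neg_mul_norm_sub_sq {b : ℝ} (hb : 0 < b) (x : V) :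
    ∫⁻ y, ENNReal.ofReal (exp (-b * ‖x - y‖ ^ 2)) =
      ENNReal.ofReal ((π / b) ^ ((finrank ℝ V : ℝ) / 2)) := by
  have hgauss := GaussianFourier.integral_rexp_neg_mul_sq_norm (V := V) hb
  have hint : Integrable fun v : V => exp (-b * ‖v‖ ^ 2) :=
    Integrable.of_integral_ne_zero (by rw [hgauss]; positivity)
  simp_rw [norm_sub_rev x]
  rw [lintegral_sub_right_eq_self (fun v => ENNReal.ofReal (exp (-b * ‖v‖ ^ 2))) x,
    ← ofReal_integral_eq_lintegral_ofReal hint (.of_forall fun v => (exp_pos _).le), hgauss]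

theorem lintegral_ofReal_heatKernel_rpow {q s : ℝ} (hq : 0 < q) (hs : 0 < s) (x : V) :
    ∫⁻ y, ENNReal.ofReal (heatKernel s x y) ^ q =
      ENNReal.ofReal ((2 * π / q) ^ ((finrank ℝ V : ℝ) / 2) *
        s ^ ((1 - q) * (finrank ℝ V : ℝ) / 2)) := by
  set d : ℝ := (finrank ℝ V : ℝ)
  have hpow : ∀ y, ENNReal.ofReal (heatKernel s x y) ^ q =
      ENNReal.ofReal (s ^ (-d / 2 * q)) * ENNReal.ofReal (exp (-(q / (2 * s)) * ‖x - y‖ ^ 2)) := by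
    intro y
    rw [ENNReal.ofReal_rpow_of_nonneg (heatKernel_nonneg hs.le x y) hq.le, heatKernel,
      mul_rpow (by positivity) (exp_pos _).le, ← rpow_mul hs.le, ← exp_mul,
      ENNReal.ofReal_mul (by positivity)]
    congr 3
    ring
  simp_rw [hpow]
  rw [lintegral_const_mul' _ _ ENNReal.ofReal_ne_top,
    lintegral_ofReal_exp_neg_mul_norm_sub_sq (by positivity), ← ENNReal.ofReal_mul (by positivity)]
  congr 1
  rw [show π / (q / (2 * s)) = 2 * π / q * s by field_simp, mul_rpow (by positivity) hs.le,
    show (1 - q) * d / 2 = -d / 2 * q + d / 2 by ring, rpow_add hs]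
  ring

theorem setLIntegral_ofReal_mul_heatKernel_le {p q s : ℝ} (hpq : p.HolderConjugate q) (hs : 0 < s)
    {f : V → ℝ} {B : Set V} (hf : AEMeasurable f (volume.restrict B)) (x : V) :
    ∫⁻ y in B, ENNReal.ofReal (f y * heatKernel s x y) ≤
      (∫⁻ y in B, ENNReal.ofReal (f y) ^ p) ^ (1 / p) *
        ENNReal.ofReal ((2 * π / q) ^ ((finrank ℝ V : ℝ) / (2 * q)) *
          s ^ (-(finrank ℝ V : ℝ) / (2 * p))) := by
  set d : ℝ := (finrank ℝ V : ℝ)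
  have hq := hpq.symm.pos
  calc ∫⁻ y in B, ENNReal.ofReal (f y * heatKernel s x y)
      = ∫⁻ y in B, ENNReal.ofReal (f y) * ENNReal.ofReal (heatKernel s x y) := by
        simp_rw [ENNReal.ofReal_mul' (heatKernel_nonneg hs.le x _)]
    _ ≤ (∫⁻ y in B, ENNReal.ofReal (f y) ^ p) ^ (1 / p) *
          (∫⁻ y in B, ENNReal.ofReal (heatKernel s x y) ^ q) ^ (1 / q) :=
        ENNReal.lintegral_mul_le_Lp_mul_Lq _ hpq hf.ennreal_ofReal
          (continuous_heatKernel s x).measurable.ennreal_ofReal.aemeasurable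
    _ ≤ (∫⁻ y in B, ENNReal.ofReal (f y) ^ p) ^ (1 / p) *
          (∫⁻ y, ENNReal.ofReal (heatKernel s x y) ^ q) ^ (1 / q) := by
        gcongr
        exact Measure.restrict_le_self
    _ = _ := by
        have hexp : (1 - q) * d / 2 * (1 / q) = -d / (2 * p) := by
          have := hpq.inv_add_inv_eq_one
          field_simp at this ⊢
          linear_combination d * this
        rw [lintegral_ofReal_heatKernel_rpow hq hs,
          ENNReal.ofReal_rpow_of_nonneg (by positivity) (by positivity),
          mul_rpow (by positivity) (by positivity), ← rpow_mul (by positivity),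
          ← rpow_mul hs.le, hexp]
        congr 4
        ring

theorem lintegral_Ioc_ofReal_rpow {r T : ℝ} (hr : -1 < r) (hT : 0 ≤ T) :
    ∫⁻ s in Set.Ioc 0 T, ENNReal.ofReal (s ^ r) = ENNReal.ofReal (T ^ (r + 1) / (r + 1)) := by
  rw [← ofReal_integral_eq_lintegral_ofReal (intervalIntegral.intervalIntegrable_rpow' hr).1,
    ← intervalIntegral.integral_of_le hT, integral_rpow (.inl hr), zero_rpow (by linarith),
    sub_zero]
  filter_upwards [ae_restrict_mem measurableSet_Ioc] with s hs using rpow_nonneg hs.1.le _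

theorem exists_lintegral_Ioc_setLIntegral_ofReal_mul_heatKernel_le {p T : ℝ} (hp : 1 < p)
    (hpd : (finrank ℝ V : ℝ) < 2 * p) (hT : 0 < T) :
    ∃ C : ℝ, 0 < C ∧ ∀ (B : Set V) (f : V → ℝ), AEMeasurable f (volume.restrict B) → ∀ x : V,
      ∫⁻ s in Set.Ioc 0 T, ∫⁻ y in B, ENNReal.ofReal (f y * heatKernel s x y) ≤
        ENNReal.ofReal C * (∫⁻ y in B, ENNReal.ofReal (f y) ^ p) ^ (1 / p) := by
  set d : ℝ := (finrank ℝ V : ℝ)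
  set q := p.conjExponent
  have hpq : p.HolderConjugate q := .conjExponent hp
  set r : ℝ := -d / (2 * p)
  have hr : -1 < r := by
    have : d / (2 * p) < 1 := (div_lt_one (by linarith)).2 hpd
    simp only [r, neg_div]
    linarith
  set c : ℝ := (2 * π / q) ^ (d / (2 * q))
  have hc : 0 < c := rpow_pos_of_pos (div_pos (by positivity) hpq.symm.pos) _
  have hT' : 0 < T ^ (r + 1) / (r + 1) := div_pos (rpow_pos_of_pos hT _) (by linarith)
  refine ⟨c * (T ^ (r + 1) / (r + 1)), by positivity, fun B f hf x => ?_⟩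
  set N := (∫⁻ y in B, ENNReal.ofReal (f y) ^ p) ^ (1 / p)
  calc ∫⁻ s in Set.Ioc 0 T, ∫⁻ y in B, ENNReal.ofReal (f y * heatKernel s x y)
      ≤ ∫⁻ s in Set.Ioc 0 T, N * ENNReal.ofReal c * ENNReal.ofReal (s ^ r) :=
        setLIntegral_mono' measurableSet_Ioc fun s hs => by
          rw [mul_assoc, ← ENNReal.ofReal_mul hc.le]
          exact setLIntegral_ofReal_mul_heatKernel_le hpq hs.1 hf x
    _ = ENNReal.ofReal (c * (T ^ (r + 1) / (r + 1))) * N := by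
        rw [lintegral_const_mul _ (by fun_prop),
          lintegral_Ioc_ofReal_rpow hr hT.le, ENNReal.ofReal_mul hc.le]
        ring

theorem kernel_holder_estimate_general (n : ℕ) (hn : 1 < n) (δ p T : ℝ)
    (hδ : δ ∈ Set.Ioo (0 : ℝ) 1) (hT : 0 < T) :
    ∃ C : ℝ, 0 < C ∧
      ∀ R : ℝ, 0 < R → ∀ g : EuclideanSpace ℝ (Fin n) → ℝ, Measurable g →
        IntegrableOn (fun y => |g y| ^ (p * (n : ℝ) * (1 + δ) / 2))
          (closedBall (0 : EuclideanSpace ℝ (Fin n)) R) volume →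
        ∀ x : EuclideanSpace ℝ (Fin n),
          (∫⁻ s in Set.Ioc (0 : ℝ) T,
            ∫⁻ y in closedBall (0 : EuclideanSpace ℝ (Fin n)) R,
              ENNReal.ofReal (|g y| ^ (p * (1 + δ / 2)) *
                (s ^ (-(n : ℝ) / 2) * Real.exp (-‖x - y‖ ^ 2 / (2 * s))))) ≤
          ENNReal.ofReal (C *
            (∫ y in closedBall (0 : EuclideanSpace ℝ (Fin n)) R,
              |g y| ^ (p * (n : ℝ) * (1 + δ) / 2)) ^ ((2 + δ) / ((n : ℝ) * (1 + δ)))) := by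
  obtain ⟨hδ0, -⟩ := hδ
  have hn2 : (2 : ℝ) ≤ n := by exact_mod_cast hn
  set q : ℝ := n * (1 + δ) / (2 + δ)
  have hq : 1 < q := by
    rw [lt_div_iff₀ (by linarith)]
    nlinarith
  have hqn : (finrank ℝ (EuclideanSpace ℝ (Fin n)) : ℝ) < 2 * q := by
    rw [finrank_euclideanSpace_fin, mul_div_assoc', lt_div_iff₀ (by linarith)]
    nlinarith
  obtain ⟨C, hC, hbound⟩ := exists_lintegral_Ioc_setLIntegral_ofReal_mul_heatKernel_le hq hqn hT
  refine ⟨C, hC, fun R _ g hg hgint x => ?_⟩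
  have hpow : ∀ y, ENNReal.ofReal (|g y| ^ (p * (1 + δ / 2))) ^ q =
      ENNReal.ofReal (|g y| ^ (p * n * (1 + δ) / 2)) := fun y => by
    rw [ENNReal.ofReal_rpow_of_nonneg (by positivity) (by linarith), ← rpow_mul (abs_nonneg _)]
    congr 2
    simp only [q]
    field_simp
  have hnorm := ofReal_integral_eq_lintegral_ofReal hgint
    (.of_forall fun y => rpow_nonneg (abs_nonneg (g y)) _)
  have hexp : 1 / q = (2 + δ) / (n * (1 + δ)) := one_div_div _ _
  have hestimate := hbound (closedBall 0 R) (fun y => |g y| ^ (p * (1 + δ / 2))) (by fun_prop) x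
  simp only [heatKernel, finrank_euclideanSpace_fin, hpow, ← hnorm] at hestimate
  rwa [ENNReal.ofReal_rpow_of_nonneg (integral_nonneg fun y => by positivity) (by positivity),
    ← ENNReal.ofReal_mul hC.le, hexp] at hestimate

/-- for `n > 1`, `δ ∈ (0,1)`, `p ≥ 1`, `T > 0`, there is a constant `C`
(depending only on `n, δ, p, T`) such that for all `R > 0` and all measurable `g` with
`∫_{|y|≤R} |g|^{pn(1+δ)/2} < ∞`, and all `x ∈ ℝ^n`,
`∫_0^T ∫_{|y|≤R} |g(y)|^{p(1+δ/2)} K_s(x,y) dy ds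
  ≤ C (∫_{|y|≤R} |g|^{pn(1+δ)/2})^{(2+δ)/(n(1+δ))}`. -/
theorem kernel_holder_estimate (n : ℕ) (hn : 1 < n) (δ p T : ℝ)
    (hδ : δ ∈ Set.Ioo (0 : ℝ) 1) (hp : 1 ≤ p) (hT : 0 < T) :
    ∃ C : ℝ, 0 < C ∧
      ∀ R : ℝ, 0 < R → ∀ g : EuclideanSpace ℝ (Fin n) → ℝ, Measurable g →
        IntegrableOn (fun y => |g y| ^ (p * (n : ℝ) * (1 + δ) / 2))
          (closedBall (0 : EuclideanSpace ℝ (Fin n)) R) volume →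
        ∀ x : EuclideanSpace ℝ (Fin n),
          (∫⁻ s in Set.Ioc (0 : ℝ) T,
            ∫⁻ y in closedBall (0 : EuclideanSpace ℝ (Fin n)) R,
              ENNReal.ofReal (|g y| ^ (p * (1 + δ / 2)) *
                (s ^ (-(n : ℝ) / 2) * Real.exp (-‖x - y‖ ^ 2 / (2 * s))))) ≤
          ENNReal.ofReal (C *
            (∫ y in closedBall (0 : EuclideanSpace ℝ (Fin n)) R,
              |g y| ^ (p * (n : ℝ) * (1 + δ) / 2)) ^ ((2 + δ) / ((n : ℝ) * (1 + δ)))) :=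
  kernel_holder_estimate_general n hn δ p T hδ hT
end

section
/- Let (X_k) be a sequence of ℝ^n-valued random variables on a probability space converging almost surely to a random variable X. Suppose there is a continuous function G : ℝ^n → [0,∞) with ∫_{ℝ^n} G dλ < ∞ (λ = Lebesgue measure) such that for each k the law of X_k is absolutely continuous with respect to λ with density p_k satisfying p_k(y) ≤ G(y) for λ-a.e. y. Then the law of X is absolutely continuous with respect to λ, and its density p satisfies p(y) ≤ G(y) for λ-a.e. y. -/
/-!
Dominate every law `μ.map (X k)` by the single measure `ν = volume.withDensity G`.
Almost sure convergence and Fatou's lemma give the portmanteau inequality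
`μ.map X₀ U ≤ liminf (μ.map (X k) U) ≤ ν U` on open sets `U`; since `G` is continuous, `ν` is
locally finite, hence outer regular on `ℝⁿ`, so the inequality extends to all sets. Finally,
`μ.map X₀ ≤ ν` says precisely that `μ.map X₀ ≪ volume` with density at most `G`.
-/

open MeasureTheory Filter Topology
open scoped ENNReal

namespace MeasureTheory.Measure

section Portmanteau

variable {Ω E : Type*} [MeasurableSpace Ω] [MeasurableSpace E] [TopologicalSpace E]
  {μ : Measure Ω}

theorem map_apply_le_liminf_of_ae_tendsto [OpensMeasurableSpace E] {ι : Type*} {l : Filter ι}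
    [l.IsCountablyGenerated] {X : ι → Ω → E} {X₀ : Ω → E} (hX : ∀ i, AEMeasurable (X i) μ)
    (hX₀ : AEMeasurable X₀ μ) (hlim : ∀ᵐ ω ∂μ, Tendsto (X · ω) l (𝓝 (X₀ ω)))
    {U : Set E} (hU : IsOpen U) :
    μ.map X₀ U ≤ liminf (fun i => μ.map (X i) U) l := by
  set g : E → ℝ≥0∞ := U.indicator 1 with hg
  have hgm : Measurable g := measurable_one.indicator hU.measurableSet
  have hmap : ∀ {Y : Ω → E}, AEMeasurable Y μ → μ.map Y U = ∫⁻ ω, g (Y ω) ∂μ := fun hY => by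
    rw [hg, ← lintegral_indicator_one hU.measurableSet, lintegral_map' hgm.aemeasurable hY]
  have hlsc : ∀ᵐ ω ∂μ, g (X₀ ω) ≤ liminf (fun i => g (X i ω)) l := by
    filter_upwards [hlim] with ω hω
    exact ((hU.lowerSemicontinuous_indicator zero_le_one).le_liminf (X₀ ω)).trans
      hω.liminf_le_liminf_comp
  calc μ.map X₀ U = ∫⁻ ω, g (X₀ ω) ∂μ := hmap hX₀
    _ ≤ ∫⁻ ω, liminf (fun i => g (X i ω)) l ∂μ := lintegral_mono_ae hlsc
    _ ≤ liminf (fun i => ∫⁻ ω, g (X i ω) ∂μ) l :=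
        lintegral_liminf_le' fun i => hgm.comp_aemeasurable (hX i)
    _ = liminf (fun i => μ.map (X i) U) l := by simp_rw [hmap (hX _)]

theorem le_of_forall_isOpen_le {μ ν : Measure E} [ν.OuterRegular]
    (h : ∀ U, IsOpen U → μ U ≤ ν U) : μ ≤ ν := by
  refine le_intro fun s _ _ => ?_
  rw [Set.measure_eq_iInf_isOpen s ν]
  exact le_iInf₂ fun U hsU => le_iInf fun hU => (measure_mono hsU).trans (h U hU)

theorem map_le_of_ae_tendsto [OpensMeasurableSpace E] {ι : Type*} {l : Filter ι} [l.NeBot]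
    [l.IsCountablyGenerated] {X : ι → Ω → E} {X₀ : Ω → E} (hX : ∀ i, AEMeasurable (X i) μ)
    (hX₀ : AEMeasurable X₀ μ) (hlim : ∀ᵐ ω ∂μ, Tendsto (X · ω) l (𝓝 (X₀ ω)))
    {ν : Measure E} [ν.OuterRegular] (hle : ∀ i, μ.map (X i) ≤ ν) : μ.map X₀ ≤ ν :=
  le_of_forall_isOpen_le fun U hU => (map_apply_le_liminf_of_ae_tendsto hX hX₀ hlim hU).trans
    (liminf_le_of_frequently_le' (.of_forall fun i => hle i U))

end Portmanteau

theorem le_withDensity_iff {α : Type*} [MeasurableSpace α] {μ ν : Measure α} {f : α → ℝ≥0∞}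
    [μ.HaveLebesgueDecomposition ν] [SigmaFinite ν] :
    μ ≤ ν.withDensity f ↔ μ ≪ ν ∧ μ.rnDeriv ν ≤ᵐ[ν] f := by
  refine ⟨fun hle => ⟨?_, ?_⟩, fun ⟨hac, hdens⟩ => ?_⟩
  · exact (absolutelyContinuous_of_le hle).trans (withDensity_absolutelyContinuous _ _)
  · refine ae_le_of_forall_setLIntegral_le_of_sigmaFinite (measurable_rnDeriv _ _) fun s hs _ => ?_
    calc ∫⁻ y in s, μ.rnDeriv ν y ∂ν ≤ μ s := setLIntegral_rnDeriv_le s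
      _ ≤ ν.withDensity f s := hle s
      _ = ∫⁻ y in s, f y ∂ν := withDensity_apply _ hs
  · calc μ = ν.withDensity (μ.rnDeriv ν) := (withDensity_rnDeriv_eq _ _ hac).symm
      _ ≤ ν.withDensity f := withDensity_mono hdens

end MeasureTheory.Measure

theorem density_bound_transfers_to_limit_general {n : ℕ} {Ω : Type*} [MeasurableSpace Ω]
    (μ : Measure Ω) [IsProbabilityMeasure μ]
    (X : ℕ → Ω → EuclideanSpace ℝ (Fin n)) (X₀ : Ω → EuclideanSpace ℝ (Fin n))
    (hXm : ∀ k, Measurable (X k))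
    (hconv : ∀ᵐ ω ∂μ, Tendsto (fun k => X k ω) atTop (nhds (X₀ ω)))
    (G : EuclideanSpace ℝ (Fin n) → ℝ) (hGc : Continuous G)
    (hac : ∀ k, μ.map (X k) ≪ (volume : Measure (EuclideanSpace ℝ (Fin n))))
    (hdens : ∀ k, ∀ᵐ y ∂(volume : Measure (EuclideanSpace ℝ (Fin n))),
      (μ.map (X k)).rnDeriv volume y ≤ ENNReal.ofReal (G y)) :
    μ.map X₀ ≪ (volume : Measure (EuclideanSpace ℝ (Fin n))) ∧
      ∀ᵐ y ∂(volume : Measure (EuclideanSpace ℝ (Fin n))),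
        (μ.map X₀).rnDeriv volume y ≤ ENNReal.ofReal (G y) := by
  have hXae k : AEMeasurable (X k) μ := (hXm k).aemeasurable
  have hX₀ : AEMeasurable X₀ μ := aemeasurable_of_tendsto_metrizable_ae' hXae hconv
  -- with this instance `volume.withDensity G` is regular, `ℝⁿ` being σ-compact and metrizable
  have : IsLocallyFiniteMeasure (volume.withDensity fun y => ENNReal.ofReal (G y)) :=
    IsLocallyFiniteMeasure.withDensity_ofReal hGc
  exact Measure.le_withDensity_iff.1 <| Measure.map_le_of_ae_tendsto hXae hX₀ hconv fun k =>
    Measure.le_withDensity_iff.2 ⟨hac k, hdens k⟩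

/-- if `ℝ^n`-valued random variables `X_k` converge almost surely to `X`,
and each law of `X_k` has a Lebesgue density bounded by a fixed continuous integrable
function `G`, then the law of `X` is absolutely continuous with density bounded by `G`. -/
theorem density_bound_transfers_to_limit {n : ℕ} {Ω : Type*} [MeasurableSpace Ω]
    (μ : Measure Ω) [IsProbabilityMeasure μ]
    (X : ℕ → Ω → EuclideanSpace ℝ (Fin n)) (X₀ : Ω → EuclideanSpace ℝ (Fin n))
    (hXm : ∀ k, Measurable (X k)) (hX₀m : Measurable X₀)
    (hconv : ∀ᵐ ω ∂μ, Tendsto (fun k => X k ω) atTop (nhds (X₀ ω)))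
    (G : EuclideanSpace ℝ (Fin n) → ℝ) (hGc : Continuous G) (hG0 : ∀ y, 0 ≤ G y)
    (hGint : Integrable G (volume : Measure (EuclideanSpace ℝ (Fin n))))
    (hac : ∀ k, μ.map (X k) ≪ (volume : Measure (EuclideanSpace ℝ (Fin n))))
    (hdens : ∀ k, ∀ᵐ y ∂(volume : Measure (EuclideanSpace ℝ (Fin n))),
      (μ.map (X k)).rnDeriv volume y ≤ ENNReal.ofReal (G y)) :
    μ.map X₀ ≪ (volume : Measure (EuclideanSpace ℝ (Fin n))) ∧
      ∀ᵐ y ∂(volume : Measure (EuclideanSpace ℝ (Fin n))),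
        (μ.map X₀).rnDeriv volume y ≤ ENNReal.ofReal (G y) :=
  density_bound_transfers_to_limit_general μ X X₀ hXm hconv G hGc hac hdens
end

section
/- Let n ≥ 1, s > 0, C ≥ 1, x₀ ∈ ℝ^n, and let μ be a Borel measure on ℝ^n that is absolutely continuous with respect to Lebesgue measure λ with density p satisfying p(y) ≤ C s^{−n/2} e^{−|x₀−y|²/(2Cs)} for a.e. y. Then there is a constant C' depending only on C and n such that for every Borel set U ⊂ ℝ^n, μ(U) ≤ C' s^{−1/2} λ(U)^{1/n}. -/
/-!
The density is at most `A = C s^{-n/2}` pointwise and has total mass at most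
`K = C (2πC)^{n/2}` (a Gaussian integral, in which the powers of `s` cancel). Hence
`μ U ≤ min (A λ(U)) K ≤ (A λ(U))^{1/n} K^{1 - 1/n}`, and `A^{1/n} = C^{1/n} s^{-1/2}`.
-/

open MeasureTheory Real Module

theorem ENNReal.min_le_rpow_mul_rpow (a b : ENNReal) {p q : ℝ} (hp : 0 ≤ p) (hq : 0 ≤ q)
    (hpq : p + q = 1) : min a b ≤ a ^ p * b ^ q :=
  calc min a b = min a b ^ p * min a b ^ q := by
        rw [← ENNReal.rpow_add_of_nonneg _ _ hp hq, hpq, ENNReal.rpow_one]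
    _ ≤ a ^ p * b ^ q := by gcongr <;> simp

theorem MeasureTheory.Measure.le_rpow_mul_rpow_of_rnDeriv_le {α : Type*} [MeasurableSpace α]
    {μ ν : Measure α} [SigmaFinite ν] (hμν : μ ≪ ν) {f : α → ENNReal}
    (hf : ∀ᵐ x ∂ν, μ.rnDeriv ν x ≤ f x) {A M : ENNReal} (hfA : ∀ x, f x ≤ A)
    (hfM : ∫⁻ x, f x ∂ν ≤ M) {p q : ℝ} (hp : 0 ≤ p) (hq : 0 ≤ q) (hpq : p + q = 1)
    (U : Set α) : μ U ≤ (A * ν U) ^ p * M ^ q := by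
  have : SFinite μ := sFinite_of_absolutelyContinuous hμν
  have hμU : μ U ≤ ∫⁻ x in U, f x ∂ν := by
    rw [← Measure.setLIntegral_rnDeriv hμν]
    exact lintegral_mono_ae (ae_restrict_of_ae hf)
  have hsup : ∫⁻ x in U, f x ∂ν ≤ A * ν U :=
    (lintegral_mono hfA).trans_eq (setLIntegral_const U A)
  have htot : ∫⁻ x in U, f x ∂ν ≤ M := (setLIntegral_le_lintegral U f).trans hfM
  calc μ U ≤ min (A * ν U) M := hμU.trans (le_min hsup htot)
    _ ≤ (A * ν U) ^ p * M ^ q := ENNReal.min_le_rpow_mul_rpow _ _ hp hq hpq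

section Gaussian

variable {V : Type*} [NormedAddCommGroup V] [InnerProductSpace ℝ V] [FiniteDimensional ℝ V]
  [MeasurableSpace V] [BorelSpace V]

theorem lintegral_ofReal_exp_neg_mul_sq_norm {b : ℝ} (hb : 0 < b) :
    ∫⁻ v : V, ENNReal.ofReal (rexp (-b * ‖v‖ ^ 2)) =
      ENNReal.ofReal ((π / b) ^ (finrank ℝ V / 2 : ℝ)) := by
  have hint := GaussianFourier.integral_rexp_neg_mul_sq_norm (V := V) hb
  rw [← hint, ofReal_integral_eq_lintegral_ofReal _ (.of_forall fun v ↦ (exp_pos _).le)]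
  exact Integrable.of_integral_ne_zero (by rw [hint]; positivity)

theorem lintegral_ofReal_exp_neg_norm_sub_sq_div {t : ℝ} (ht : 0 < t) (x₀ : V) :
    ∫⁻ y : V, ENNReal.ofReal (rexp (-‖x₀ - y‖ ^ 2 / (2 * t))) =
      ENNReal.ofReal ((2 * π * t) ^ (finrank ℝ V / 2 : ℝ)) := by
  have hb : 0 < (2 * t)⁻¹ := by positivity
  have hrw (y : V) : -‖x₀ - y‖ ^ 2 / (2 * t) = -(2 * t)⁻¹ * ‖y - x₀‖ ^ 2 := by
    rw [norm_sub_rev]; ring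
  simp_rw [hrw]
  rw [lintegral_sub_right_eq_self (fun v ↦ ENNReal.ofReal (rexp (-(2 * t)⁻¹ * ‖v‖ ^ 2))),
    lintegral_ofReal_exp_neg_mul_sq_norm hb, div_inv_eq_mul]
  ring_nf

end Gaussian

/-- if a measure `μ` on `ℝ^n` has a Lebesgue density bounded by
`C s^{-n/2} e^{-|x₀-y|²/(2Cs)}`, then there is `C'` depending only on `C` and `n` with
`μ(U) ≤ C' s^{-1/2} λ(U)^{1/n}` for every Borel set `U`. -/
theorem small_set_occupation_estimate (n : ℕ) (hn : 1 ≤ n) (C : ℝ) (hC : 1 ≤ C) :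
    ∃ C' : ℝ, 0 < C' ∧
      ∀ s : ℝ, 0 < s → ∀ x₀ : EuclideanSpace ℝ (Fin n),
        ∀ μ : Measure (EuclideanSpace ℝ (Fin n)),
          μ ≪ (volume : Measure (EuclideanSpace ℝ (Fin n))) →
          (∀ᵐ y ∂(volume : Measure (EuclideanSpace ℝ (Fin n))),
            μ.rnDeriv volume y ≤
              ENNReal.ofReal (C * s ^ (-(n : ℝ) / 2) *
                Real.exp (-‖x₀ - y‖ ^ 2 / (2 * C * s)))) →
          ∀ U : Set (EuclideanSpace ℝ (Fin n)), MeasurableSet U →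
            μ U ≤ ENNReal.ofReal (C' * s ^ (-(1 : ℝ) / 2)) *
              (volume U) ^ ((1 : ℝ) / n) := by
  have hC0 : 0 < C := one_pos.trans_le hC
  have hn0 : (0 : ℝ) < n := by exact_mod_cast hn
  have hp : (0 : ℝ) ≤ 1 / n := by positivity
  have hq : (0 : ℝ) ≤ (n - 1) / n := div_nonneg (by simpa using hn) hn0.le
  have hpq : (1 : ℝ) / n + (n - 1) / n = 1 := by field_simp; ring
  set K := C * (2 * π * C) ^ ((n : ℝ) / 2)
  refine ⟨C ^ ((1 : ℝ) / n) * K ^ (((n : ℝ) - 1) / n), by positivity, ?_⟩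
  intro s hs x₀ μ hμ hdensity U _
  set A := C * s ^ (-(n : ℝ) / 2)
  have hsup (y : EuclideanSpace ℝ (Fin n)) :
      ENNReal.ofReal (A * rexp (-‖x₀ - y‖ ^ 2 / (2 * C * s))) ≤ ENNReal.ofReal A := by
    refine ENNReal.ofReal_le_ofReal (mul_le_of_le_one_right (by positivity) ?_)
    exact exp_le_one_iff.mpr (div_nonpos_of_nonpos_of_nonneg (by nlinarith) (by positivity))
  have htot : ∫⁻ y, ENNReal.ofReal (A * rexp (-‖x₀ - y‖ ^ 2 / (2 * C * s))) =
      ENNReal.ofReal K := by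
    simp_rw [ENNReal.ofReal_mul (show 0 ≤ A by positivity), mul_assoc 2 C s]
    rw [lintegral_const_mul' _ _ ENNReal.ofReal_ne_top,
      lintegral_ofReal_exp_neg_norm_sub_sq_div (by positivity), finrank_euclideanSpace_fin,
      ← ENNReal.ofReal_mul (by positivity)]
    congr 1
    rw [← mul_assoc, mul_rpow (by positivity) hs.le, mul_mul_mul_comm, ← rpow_add hs, neg_div,
      neg_add_cancel, rpow_zero, mul_one]
  have hA : A ^ ((1 : ℝ) / n) = C ^ ((1 : ℝ) / n) * s ^ (-(1 : ℝ) / 2) := by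
    rw [mul_rpow hC0.le (by positivity), ← rpow_mul hs.le]
    congr 2
    field_simp
  calc μ U ≤ (ENNReal.ofReal A * volume U) ^ ((1 : ℝ) / n) *
        ENNReal.ofReal K ^ ((n - 1 : ℝ) / n) :=
        Measure.le_rpow_mul_rpow_of_rnDeriv_le hμ hdensity hsup htot.le hp hq hpq U
    _ = _ := by
      rw [ENNReal.mul_rpow_of_nonneg _ _ hp, ENNReal.ofReal_rpow_of_nonneg (by positivity) hp,
        ENNReal.ofReal_rpow_of_nonneg (by positivity) hq, hA, mul_right_comm,
        ← ENNReal.ofReal_mul (by positivity)]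
      ring_nf
end

section
/- Let 0 ≤ δ ≤ 1/2, C > 0, and let A_0, A_1, …, A_m : ℝ^n → ℝ^n be measurable vector fields with A_1, …, A_m differentiable, satisfying Σ_{l=1}^m |A_l(x)| ≤ C(1 + |x|²)^{1/2 − δ} and ⟨x, A_0(x)⟩ ≤ C(1 + |x|²)^{1 − δ} for all x. Let g₁(x) = (1 + |x|²)^{δ}. Then there exists a constant C₃ (depending only on C, m, n, δ) such that for all x ∈ ℝ^n: (1/2) Σ_{l=1}^m |⟨∇g₁(x), A_l(x)⟩|² + (1/2) Σ_{l=1}^m ⟨(Hess g₁)(x) A_l(x), A_l(x)⟩ + ⟨∇g₁(x), A_0(x)⟩ ≤ C₃. -/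
/-!
Write `s = 1 + ‖x‖²`. Then `∇g₁(x) = 2δ s^(δ-1) x` and
`⟪Hess g₁(x) v, v⟫ = 2δ s^(δ-1) ‖v‖² + 4δ(δ-1) s^(δ-2) ⟪x, v⟫²`, whose second term is `≤ 0`
for `δ ≤ 1`. With `⟪x, v⟫² ≤ s ‖v‖²` and `Σ ‖A_l‖² ≤ (Σ ‖A_l‖)² ≤ C² s^(1-2δ)`, the three
terms are bounded by `4δ²C² s⁰`, `2δC² s^(-δ)` and `2δC s⁰`, and `s ≥ 1`.
-/

open scoped RealInnerProductSpace

/-- The power Lyapunov function `g₁(x) = (1 + |x|²)^δ`. -/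
noncomputable def powerLyapunov {n : ℕ} (δ : ℝ) (x : EuclideanSpace ℝ (Fin n)) : ℝ :=
  (1 + ‖x‖ ^ 2) ^ δ

lemma sum_norm_sq_le_sq_of_sum_norm_le {ι F : Type*} [SeminormedAddCommGroup F] (s : Finset ι)
    {v : ι → F} {K : ℝ} (h : ∑ i ∈ s, ‖v i‖ ≤ K) : ∑ i ∈ s, ‖v i‖ ^ 2 ≤ K ^ 2 :=
  (Finset.sum_sq_le_sq_sum_of_nonneg fun i _ => norm_nonneg (v i)).trans <|
    pow_le_pow_left₀ (Finset.sum_nonneg fun i _ => norm_nonneg (v i)) h 2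

section

variable {E : Type*} [NormedAddCommGroup E] [InnerProductSpace ℝ E]

lemma hasFDerivAt_one_add_norm_sq_rpow (p : ℝ) (x : E) :
    HasFDerivAt (fun y : E => (1 + ‖y‖ ^ 2) ^ p)
      ((2 * p * (1 + ‖x‖ ^ 2) ^ (p - 1)) • innerSL ℝ x) x := by
  have h := ((hasStrictFDerivAt_norm_sq x).hasFDerivAt.const_add 1).rpow_const (p := p)
    (Or.inl (by positivity))
  refine h.congr_fderiv ?_
  ext v
  simp only [smul_apply, innerSL_apply_apply, smul_eq_mul, nsmul_eq_mul]
  ring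

lemma inner_sq_le_one_add_norm_sq_mul (x v : E) :
    ⟪x, v⟫ ^ 2 ≤ (1 + ‖x‖ ^ 2) * ‖v‖ ^ 2 := by
  have h : |⟪x, v⟫| ≤ ‖x‖ * ‖v‖ := abs_real_inner_le_norm x v
  calc ⟪x, v⟫ ^ 2 = |⟪x, v⟫| ^ 2 := (sq_abs _).symm
    _ ≤ (‖x‖ * ‖v‖) ^ 2 := pow_le_pow_left₀ (abs_nonneg _) h 2
    _ ≤ (1 + ‖x‖ ^ 2) * ‖v‖ ^ 2 := by nlinarith [sq_nonneg ‖v‖]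

variable [CompleteSpace E]

lemma gradient_one_add_norm_sq_rpow (δ : ℝ) :
    gradient (fun y : E => (1 + ‖y‖ ^ 2) ^ δ) =
      fun x => (2 * δ * (1 + ‖x‖ ^ 2) ^ (δ - 1)) • x := by
  refine gradient_eq fun x => hasGradientAt_iff_hasFDerivAt.2 ?_
  refine (hasFDerivAt_one_add_norm_sq_rpow δ x).congr_fderiv ?_
  ext v
  simp

lemma inner_gradient_one_add_norm_sq_rpow (δ : ℝ) (x v : E) :
    ⟪gradient (fun y : E => (1 + ‖y‖ ^ 2) ^ δ) x, v⟫ =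
      2 * δ * (1 + ‖x‖ ^ 2) ^ (δ - 1) * ⟪x, v⟫ := by
  rw [gradient_one_add_norm_sq_rpow, real_inner_smul_left]

lemma inner_fderiv_gradient_one_add_norm_sq_rpow (δ : ℝ) (x v : E) :
    ⟪fderiv ℝ (gradient (fun y : E => (1 + ‖y‖ ^ 2) ^ δ)) x v, v⟫ =
      2 * δ * (1 + ‖x‖ ^ 2) ^ (δ - 1) * ‖v‖ ^ 2 +
        4 * δ * (δ - 1) * (1 + ‖x‖ ^ 2) ^ (δ - 2) * ⟪x, v⟫ ^ 2 := by
  have hcoeff := (hasFDerivAt_one_add_norm_sq_rpow (δ - 1) x).const_mul (2 * δ)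
  have hfield : HasFDerivAt (fun y : E => (2 * δ * (1 + ‖y‖ ^ 2) ^ (δ - 1)) • y) _ x :=
    hcoeff.smul (hasFDerivAt_id x)
  rw [gradient_one_add_norm_sq_rpow, hfield.fderiv]
  simp only [add_apply, smul_apply, ContinuousLinearMap.id_apply,
    ContinuousLinearMap.smulRight_apply, innerSL_apply_apply, inner_add_left,
    real_inner_smul_left, real_inner_self_eq_norm_sq, smul_eq_mul]
  rw [show δ - 1 - 1 = δ - 2 by ring]
  ring

lemma inner_gradient_one_add_norm_sq_rpow_sq_le (δ : ℝ) (x v : E) :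
    ⟪gradient (fun y : E => (1 + ‖y‖ ^ 2) ^ δ) x, v⟫ ^ 2 ≤
      4 * δ ^ 2 * (1 + ‖x‖ ^ 2) ^ (2 * δ - 1) * ‖v‖ ^ 2 := by
  have hs : 0 < 1 + ‖x‖ ^ 2 := by positivity
  have hexp :
      ((1 + ‖x‖ ^ 2) ^ (δ - 1)) ^ 2 * (1 + ‖x‖ ^ 2) = (1 + ‖x‖ ^ 2) ^ (2 * δ - 1) := by
    rw [← Real.rpow_mul_natCast hs.le, ← Real.rpow_add_one hs.ne']
    ring_nf
  calc ⟪gradient (fun y : E => (1 + ‖y‖ ^ 2) ^ δ) x, v⟫ ^ 2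
      = 4 * δ ^ 2 * ((1 + ‖x‖ ^ 2) ^ (δ - 1)) ^ 2 * ⟪x, v⟫ ^ 2 := by
        rw [inner_gradient_one_add_norm_sq_rpow]; ring
    _ ≤ 4 * δ ^ 2 * ((1 + ‖x‖ ^ 2) ^ (δ - 1)) ^ 2 * ((1 + ‖x‖ ^ 2) * ‖v‖ ^ 2) := by
        gcongr; exact inner_sq_le_one_add_norm_sq_mul x v
    _ = 4 * δ ^ 2 * (1 + ‖x‖ ^ 2) ^ (2 * δ - 1) * ‖v‖ ^ 2 := by
        rw [← hexp]; ring

lemma inner_fderiv_gradient_one_add_norm_sq_rpow_le {δ : ℝ} (hδ0 : 0 ≤ δ) (hδ1 : δ ≤ 1)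
    (x v : E) :
    ⟪fderiv ℝ (gradient (fun y : E => (1 + ‖y‖ ^ 2) ^ δ)) x v, v⟫ ≤
      2 * δ * (1 + ‖x‖ ^ 2) ^ (δ - 1) * ‖v‖ ^ 2 := by
  rw [inner_fderiv_gradient_one_add_norm_sq_rpow]
  have hneg : 4 * δ * (δ - 1) * (1 + ‖x‖ ^ 2) ^ (δ - 2) * ⟪x, v⟫ ^ 2 ≤ 0 :=
    mul_nonpos_of_nonpos_of_nonneg
      (mul_nonpos_of_nonpos_of_nonneg
        (mul_nonpos_of_nonneg_of_nonpos (by positivity) (by linarith)) (by positivity))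
      (sq_nonneg _)
  linarith

variable {ι : Type*} [Fintype ι]

lemma sum_inner_gradient_one_add_norm_sq_rpow_sq_le (δ C : ℝ) (x : E) (v : ι → E)
    (hv : ∑ l, ‖v l‖ ≤ C * (1 + ‖x‖ ^ 2) ^ ((1 : ℝ) / 2 - δ)) :
    ∑ l, ⟪gradient (fun y : E => (1 + ‖y‖ ^ 2) ^ δ) x, v l⟫ ^ 2 ≤
      4 * δ ^ 2 * C ^ 2 := by
  have hs : 0 < 1 + ‖x‖ ^ 2 := by positivity
  calc ∑ l, ⟪gradient (fun y : E => (1 + ‖y‖ ^ 2) ^ δ) x, v l⟫ ^ 2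
      ≤ ∑ l, 4 * δ ^ 2 * (1 + ‖x‖ ^ 2) ^ (2 * δ - 1) * ‖v l‖ ^ 2 :=
        Finset.sum_le_sum fun l _ => inner_gradient_one_add_norm_sq_rpow_sq_le δ x (v l)
    _ = 4 * δ ^ 2 * (1 + ‖x‖ ^ 2) ^ (2 * δ - 1) * ∑ l, ‖v l‖ ^ 2 := by rw [Finset.mul_sum]
    _ ≤ 4 * δ ^ 2 * (1 + ‖x‖ ^ 2) ^ (2 * δ - 1) *
          (C * (1 + ‖x‖ ^ 2) ^ ((1 : ℝ) / 2 - δ)) ^ 2 := by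
        gcongr; exact sum_norm_sq_le_sq_of_sum_norm_le _ hv
    _ = 4 * δ ^ 2 * C ^ 2 * (1 + ‖x‖ ^ 2) ^ (2 * δ - 1 + (1 / 2 - δ) * (2 : ℕ)) := by
        rw [Real.rpow_add hs, Real.rpow_mul_natCast hs.le]; ring
    _ = 4 * δ ^ 2 * C ^ 2 := by
        rw [show 2 * δ - 1 + (1 / 2 - δ) * ((2 : ℕ) : ℝ) = 0 by push_cast; ring,
          Real.rpow_zero, mul_one]

lemma sum_inner_fderiv_gradient_one_add_norm_sq_rpow_le {δ : ℝ} (hδ0 : 0 ≤ δ)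
    (hδ : δ ≤ 1 / 2) (C : ℝ) (x : E) (v : ι → E)
    (hv : ∑ l, ‖v l‖ ≤ C * (1 + ‖x‖ ^ 2) ^ ((1 : ℝ) / 2 - δ)) :
    ∑ l, ⟪fderiv ℝ (gradient (fun y : E => (1 + ‖y‖ ^ 2) ^ δ)) x (v l), v l⟫ ≤
      2 * δ * C ^ 2 := by
  have hs : 0 < 1 + ‖x‖ ^ 2 := by positivity
  calc ∑ l, ⟪fderiv ℝ (gradient (fun y : E => (1 + ‖y‖ ^ 2) ^ δ)) x (v l), v l⟫
      ≤ ∑ l, 2 * δ * (1 + ‖x‖ ^ 2) ^ (δ - 1) * ‖v l‖ ^ 2 :=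
        Finset.sum_le_sum fun l _ =>
          inner_fderiv_gradient_one_add_norm_sq_rpow_le hδ0 (by linarith) x (v l)
    _ = 2 * δ * (1 + ‖x‖ ^ 2) ^ (δ - 1) * ∑ l, ‖v l‖ ^ 2 := by rw [Finset.mul_sum]
    _ ≤ 2 * δ * (1 + ‖x‖ ^ 2) ^ (δ - 1) *
          (C * (1 + ‖x‖ ^ 2) ^ ((1 : ℝ) / 2 - δ)) ^ 2 := by
        gcongr; exact sum_norm_sq_le_sq_of_sum_norm_le _ hv
    _ = 2 * δ * C ^ 2 * (1 + ‖x‖ ^ 2) ^ (δ - 1 + (1 / 2 - δ) * (2 : ℕ)) := by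
        rw [Real.rpow_add hs, Real.rpow_mul_natCast hs.le]; ring
    _ ≤ 2 * δ * C ^ 2 := by
        refine mul_le_of_le_one_right (by positivity)
          (Real.rpow_le_one_of_one_le_of_nonpos (by nlinarith [sq_nonneg ‖x‖]) ?_)
        push_cast; linarith

lemma inner_gradient_one_add_norm_sq_rpow_le {δ : ℝ} (hδ0 : 0 ≤ δ) (C : ℝ) (x w : E)
    (hw : ⟪x, w⟫ ≤ C * (1 + ‖x‖ ^ 2) ^ ((1 : ℝ) - δ)) :
    ⟪gradient (fun y : E => (1 + ‖y‖ ^ 2) ^ δ) x, w⟫ ≤ 2 * δ * C := by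
  have hs : 0 < 1 + ‖x‖ ^ 2 := by positivity
  calc ⟪gradient (fun y : E => (1 + ‖y‖ ^ 2) ^ δ) x, w⟫
      = 2 * δ * (1 + ‖x‖ ^ 2) ^ (δ - 1) * ⟪x, w⟫ :=
        inner_gradient_one_add_norm_sq_rpow δ x w
    _ ≤ 2 * δ * (1 + ‖x‖ ^ 2) ^ (δ - 1) * (C * (1 + ‖x‖ ^ 2) ^ ((1 : ℝ) - δ)) := by
        gcongr
    _ = 2 * δ * C * (1 + ‖x‖ ^ 2) ^ (δ - 1 + (1 - δ)) := by
        rw [Real.rpow_add hs]; ring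
    _ = 2 * δ * C := by
        rw [show δ - 1 + (1 - δ) = 0 by ring, Real.rpow_zero, mul_one]

end

theorem lyapunov_condition_power_general (n m : ℕ) (δ C : ℝ)
    (hδ0 : 0 ≤ δ) (hδ : δ ≤ 1 / 2) :
    ∃ C₃ : ℝ,
      ∀ (A₀ : EuclideanSpace ℝ (Fin n) → EuclideanSpace ℝ (Fin n))
        (A : Fin m → EuclideanSpace ℝ (Fin n) → EuclideanSpace ℝ (Fin n)),
        Measurable A₀ → (∀ l, Measurable (A l)) → (∀ l, Differentiable ℝ (A l)) →
        (∀ x, ∑ l, ‖A l x‖ ≤ C * (1 + ‖x‖ ^ 2) ^ ((1 : ℝ) / 2 - δ)) →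
        (∀ x, ⟪x, A₀ x⟫ ≤ C * (1 + ‖x‖ ^ 2) ^ ((1 : ℝ) - δ)) →
        ∀ x : EuclideanSpace ℝ (Fin n),
          (1 / 2) * ∑ l, ⟪gradient (powerLyapunov δ) x, A l x⟫ ^ 2 +
            (1 / 2) * ∑ l,
              ⟪(fderiv ℝ (gradient (powerLyapunov (n := n) δ)) x) (A l x), A l x⟫ +
            ⟪gradient (powerLyapunov δ) x, A₀ x⟫ ≤ C₃ := by
  refine ⟨2 * δ ^ 2 * C ^ 2 + δ * C ^ 2 + 2 * δ * C, fun A₀ A _ _ _ hA hA₀ x => ?_⟩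
  have hfirst : ∑ l, ⟪gradient (powerLyapunov δ) x, A l x⟫ ^ 2 ≤ 4 * δ ^ 2 * C ^ 2 :=
    sum_inner_gradient_one_add_norm_sq_rpow_sq_le δ C x (A · x) (hA x)
  have hsecond :
      ∑ l, ⟪(fderiv ℝ (gradient (powerLyapunov (n := n) δ)) x) (A l x), A l x⟫ ≤
        2 * δ * C ^ 2 :=
    sum_inner_fderiv_gradient_one_add_norm_sq_rpow_le hδ0 hδ C x (A · x) (hA x)
  have hdrift : ⟪gradient (powerLyapunov δ) x, A₀ x⟫ ≤ 2 * δ * C :=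
    inner_gradient_one_add_norm_sq_rpow_le hδ0 C x (A₀ x) (hA₀ x)
  linarith

/-- under the balanced growth conditions
`Σ_{l=1}^m |A_l(x)| ≤ C(1+|x|²)^{1/2−δ}` and `⟨x, A₀(x)⟩ ≤ C(1+|x|²)^{1−δ}`,
condition (3) of Assumption J1 holds for `g₁ = (1+|x|²)^δ`:
`(1/2)Σ_l |⟨∇g₁, A_l⟩|² + (1/2)Σ_l ⟨(Hess g₁)A_l, A_l⟩ + ⟨∇g₁, A₀⟩ ≤ C₃`. -/
theorem lyapunov_condition_power (n m : ℕ) (δ C : ℝ)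
    (hδ0 : 0 ≤ δ) (hδ : δ ≤ 1 / 2) (hC : 0 < C) :
    ∃ C₃ : ℝ,
      ∀ (A₀ : EuclideanSpace ℝ (Fin n) → EuclideanSpace ℝ (Fin n))
        (A : Fin m → EuclideanSpace ℝ (Fin n) → EuclideanSpace ℝ (Fin n)),
        Measurable A₀ → (∀ l, Measurable (A l)) → (∀ l, Differentiable ℝ (A l)) →
        (∀ x, ∑ l, ‖A l x‖ ≤ C * (1 + ‖x‖ ^ 2) ^ ((1 : ℝ) / 2 - δ)) →
        (∀ x, ⟪x, A₀ x⟫ ≤ C * (1 + ‖x‖ ^ 2) ^ ((1 : ℝ) - δ)) →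
        ∀ x : EuclideanSpace ℝ (Fin n),
          (1 / 2) * ∑ l, ⟪gradient (powerLyapunov δ) x, A l x⟫ ^ 2 +
            (1 / 2) * ∑ l,
              ⟪(fderiv ℝ (gradient (powerLyapunov (n := n) δ)) x) (A l x), A l x⟫ +
            ⟪gradient (powerLyapunov δ) x, A₀ x⟫ ≤ C₃ :=
  lyapunov_condition_power_general n m δ C hδ0 hδ
end
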